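/- For every i ∈ [0, N−1] and every j ∈ K_i: if w(g_j) = 2·w(g_i) then S_j ∩ S_i = S_i, and if w(g_j) = w(g_i) then S_j ∩ S_i = S_i \ {k} for some k ∈ S_i. -/

import Mathlib

noncomputable section
open scoped Classical
open Finset

/-- The 2×2 binary matrix [[1,0],[1,1]], as an ℕ-indexed function (zero outside range). -/
def G2 (a b : ℕ) : ZMod 2 :=
  if a = 0 ∧ b = 0 then 1
  else if a = 1 ∧ b = 0 then 1
  else if a = 1 ∧ b = 1 then 1
  else 0

/-- `G n i c` is the (i,c) entry of the n-th Kronecker power over F₂ of [[1,0],[1,1]],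
for row/column indices i, c ∈ [0, 2^n − 1] (standard row-major index flattening). -/
def G : ℕ → ℕ → ℕ → ZMod 2
  | 0 => fun i c => if i = 0 ∧ c = 0 then 1 else 0
  | n + 1 => fun i c => G2 (i / 2 ^ n) (c / 2 ^ n) * G n (i % 2 ^ n) (c % 2 ^ n)

/-- Row i of the polar transform G_N (N = 2^n), as a vector of its coordinates. -/
def g (n i : ℕ) : ℕ → ZMod 2 := fun c => G n i c

/-- S_i ⊆ [0, n−1]: the support of the binary representation of i. -/
def S (n i : ℕ) : Finset ℕ := (Finset.range n).filter fun a => i.testBit a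

/-- T_i = [0, n−1] \ S_i. -/
def T (n i : ℕ) : Finset ℕ := Finset.range n \ S n i

/-- Hamming weight of a vector whose coordinates are indexed by [0, 2^n − 1]. -/
def wt (n : ℕ) (v : ℕ → ZMod 2) : ℕ :=
  ((Finset.range (2 ^ n)).filter fun c => v c ≠ 0).card

/-- The index in [0, 2^n − 1] whose binary support is the set U ⊆ [0, n−1]. -/
def idx (U : Finset ℕ) : ℕ := ∑ a ∈ U, 2 ^ a

/-- K_i = {j ∈ [i+1, N−1] : w(g_j) ≥ w(g_i ⊕ g_j) and w(g_i ⊕ g_j) = w(g_i)}. -/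
def K (n i : ℕ) : Finset ℕ :=
  (Finset.Ico (i + 1) (2 ^ n)).filter fun j =>
    wt n (g n i + g n j) ≤ wt n (g n j) ∧ wt n (g n i + g n j) = wt n (g n i)

/-- One generating step of the partial order on [0, 2^n − 1]. -/
def poStep (n i j : ℕ) : Prop :=
  i < 2 ^ n ∧ j < 2 ^ n ∧
    (S n i ⊆ S n j ∨
      ∃ a b, a ∈ S n i ∧ b ∉ S n i ∧ a < b ∧ S n j = insert b (S n i \ {a}))

/-- The partial order ⪯: reflexive–transitive closure of the generating relation. -/
def po (n : ℕ) : ℕ → ℕ → Prop := Relation.ReflTransGen (poStep n)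

/-- Partial Order Property of an information set I ⊆ [0, 2^n − 1]. -/
def POP (n : ℕ) (I : Finset ℕ) : Prop :=
  ∀ i ∈ I, ∀ j, j < 2 ^ n → po n i j → j ∈ I

/-- The code C(I): all F₂-linear combinations (i.e. subset sums) of the rows g_i, i ∈ I. -/
def codewords (n : ℕ) (I : Finset ℕ) : Finset (ℕ → ZMod 2) :=
  I.powerset.image fun H => ∑ h ∈ H, g n h

/-- A_w(I): the number of codewords of C(I) of Hamming weight w. -/
def A (n : ℕ) (I : Finset ℕ) (w : ℕ) : ℕ :=
  ((codewords n I).filter fun v => wt n v = w).card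

/-- The coset C_i(I) = {g_i ⊕ ⊕_{h∈H} g_h : H ⊆ I \ [0,i]}. -/
def coset (n : ℕ) (I : Finset ℕ) (i : ℕ) : Finset (ℕ → ZMod 2) :=
  ((I.filter fun h => i < h).powerset).image fun H => g n i + ∑ h ∈ H, g n h

/-- A_{i,w}(I): the number of vectors of Hamming weight w in the coset C_i(I). -/
def Ai (n : ℕ) (I : Finset ℕ) (i w : ℕ) : ℕ :=
  ((coset n I i).filter fun v => wt n v = w).card

/-! The entry `(i, c)` of `G_N` is `1` exactly when the binary support of `c` lies in that of `i`,
so `g_i` is the indicator of `{c : S_c ⊆ S_i}`, has weight `2 ^ |S_i|`, and the coordinatewise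
product `g_i * g_j` is `g_{i ∧ j}`. Over `F₂`, `w(u + v) + 2 w(u * v) = w(u) + w(v)`, so
`w(g_i + g_j) = w(g_i)` forces `2 ^ |S_j| = 2 · 2 ^ |S_i ∩ S_j|`, i.e. `|S_j| = |S_i ∩ S_j| + 1`.
Comparing `|S_j|` with `|S_i|` in the two cases gives the claim. -/

theorem Finset.exists_inter_eq_sdiff_singleton {α : Type*} [DecidableEq α] {s t : Finset α}
    (h : #(s \ t) = 1) : ∃ k ∈ s, s ∩ t = s \ {k} := by
  obtain ⟨k, hk⟩ := card_eq_one.mp h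
  refine ⟨k, (mem_sdiff.mp (hk ▸ mem_singleton_self k)).1, ?_⟩
  rw [← hk, sdiff_sdiff_right_self, inf_eq_inter]

theorem G2_eq_ite (a b : ℕ) :
    G2 a b = if a < 2 ∧ b < 2 ∧ ∀ k, b.testBit k → a.testBit k then 1 else 0 := by
  by_cases hab : a < 2 ∧ b < 2
  · obtain ⟨ha, hb⟩ := hab
    interval_cases a <;> interval_cases b <;> simp [G2]
    exact ⟨0, rfl⟩
  · rw [if_neg (by tauto)]
    unfold G2
    rw [if_neg (by omega), if_neg (by omega), if_neg (by omega)]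

theorem testBit_imp_iff_mod_two_pow_and_div_two_pow (n c i : ℕ) :
    (∀ a, c.testBit a → i.testBit a) ↔
      (∀ a, (c % 2 ^ n).testBit a → (i % 2 ^ n).testBit a) ∧
        ∀ a, (c / 2 ^ n).testBit a → (i / 2 ^ n).testBit a := by
  simp only [Nat.testBit_mod_two_pow, Nat.testBit_div_two_pow, Bool.and_eq_true,
    decide_eq_true_eq]
  refine ⟨fun h => ⟨fun a ha => ⟨ha.1, h a ha.2⟩, fun a => h (a + n)⟩, fun ⟨hlo, hhi⟩ a => ?_⟩
  rcases lt_or_ge a n with han | han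
  · exact fun hc => (hlo a ⟨han, hc⟩).2
  · obtain ⟨b, rfl⟩ := Nat.exists_eq_add_of_le' han
    exact hhi b

theorem G_eq_ite_testBit (n i c : ℕ) :
    G n i c = if i < 2 ^ n ∧ c < 2 ^ n ∧ ∀ a, c.testBit a → i.testBit a then 1 else 0 := by
  induction n generalizing i c with
  | zero =>
    simp only [G, pow_zero, Nat.lt_one_iff]
    by_cases h : i = 0 ∧ c = 0
    · simp [h]
    · rw [if_neg h, if_neg (by tauto)]
  | succ n ih =>
    have hpos : 0 < 2 ^ n := Nat.two_pow_pos n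
    simp only [G]
    rw [G2_eq_ite, ih, ite_zero_mul_ite_zero, one_mul,
      testBit_imp_iff_mod_two_pow_and_div_two_pow n c i]
    simp only [Nat.div_lt_iff_lt_mul hpos, ← pow_succ', Nat.mod_lt _ hpos, true_and]
    congr 1
    exact propext (by tauto)

theorem lt_of_testBit_of_lt_two_pow {n c a : ℕ} (hc : c < 2 ^ n) (h : c.testBit a) : a < n :=
  (Nat.pow_lt_pow_iff_right (by norm_num)).mp ((Nat.ge_two_pow_of_testBit h).trans_lt hc)

theorem mem_S_iff_testBit {n c a : ℕ} (hc : c < 2 ^ n) : a ∈ S n c ↔ c.testBit a := by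
  simp only [S, mem_filter, mem_range, and_iff_right_iff_imp]
  exact lt_of_testBit_of_lt_two_pow hc

theorem S_subset_range (n i : ℕ) : S n i ⊆ range n := filter_subset _ _

theorem S_land (n i j : ℕ) : S n (i &&& j) = S n i ∩ S n j := by
  ext a
  simp only [S, mem_filter, mem_inter, Nat.testBit_land, Bool.and_eq_true]
  tauto

theorem S_eq_toFinset_bitIndices {n c : ℕ} (hc : c < 2 ^ n) : S n c = c.bitIndices.toFinset := by
  ext a
  rw [mem_S_iff_testBit hc, List.mem_toFinset, Nat.mem_bitIndices]

theorem g_apply (n i c : ℕ) :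
    g n i c = if i < 2 ^ n ∧ c < 2 ^ n ∧ S n c ⊆ S n i then 1 else 0 := by
  rw [g, G_eq_ite_testBit]
  congr 1
  refine propext (and_congr_right fun hi => and_congr_right fun hc => ?_)
  simp only [subset_iff, mem_S_iff_testBit hc, mem_S_iff_testBit hi]

theorem g_mul_g {n i j : ℕ} (hi : i < 2 ^ n) (hj : j < 2 ^ n) :
    g n i * g n j = g n (i &&& j) := by
  ext c
  simp only [Pi.mul_apply, g_apply, ite_zero_mul_ite_zero, one_mul, S_land, subset_inter_iff,
    hi, hj, Nat.and_lt_two_pow _ hj, true_and]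
  congr 1
  exact propext (by tauto)

theorem card_filter_S_subset {n : ℕ} {V : Finset ℕ} (hV : V ⊆ range n) :
    #{c ∈ range (2 ^ n) | S n c ⊆ V} = 2 ^ #V := by
  rw [← card_powerset, ← card_map equivBitIndices.symm.toEmbedding]
  congr 1
  ext c
  rw [mem_map_equiv, Equiv.symm_symm, mem_powerset, mem_filter, mem_range,
    equivBitIndices_apply]
  constructor
  · rintro ⟨hc, hcV⟩
    rwa [← S_eq_toFinset_bitIndices hc]
  · intro h
    have hc : c < 2 ^ n := by
      rw [← sum_toFinset_bitIndices_two_pow c]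
      exact Nat.geomSum_lt le_rfl fun k hk => mem_range.mp (hV (h hk))
    exact ⟨hc, by rwa [S_eq_toFinset_bitIndices hc]⟩

theorem wt_g {n i : ℕ} (hi : i < 2 ^ n) : wt n (g n i) = 2 ^ #(S n i) := by
  rw [wt, ← card_filter_S_subset (S_subset_range n i)]
  congr 1
  refine filter_congr fun c hc => ?_
  simp [g_apply, hi, mem_range.mp hc]

theorem wt_add_add_two_mul_wt_mul (n : ℕ) (v w : ℕ → ZMod 2) :
    wt n (v + w) + 2 * wt n (v * w) = wt n v + wt n w := by
  simp only [wt, card_filter, mul_sum, ← sum_add_distrib]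
  refine sum_congr rfl fun c _ => ?_
  simp only [Pi.add_apply, Pi.mul_apply]
  have h_pointwise : ∀ x y : ZMod 2, ((if x + y ≠ 0 then 1 else 0) + 2 * if x * y ≠ 0 then 1 else 0) =
      (if x ≠ 0 then 1 else 0) + if y ≠ 0 then 1 else 0 := by decide
  convert h_pointwise (v c) (w c) using 0

theorem wt_g_add_g {n i j : ℕ} (hi : i < 2 ^ n) (hj : j < 2 ^ n) :
    wt n (g n i + g n j) + 2 * 2 ^ #(S n i ∩ S n j) = 2 ^ #(S n i) + 2 ^ #(S n j) := by
  rw [← wt_g hi, ← wt_g hj, ← S_land, ← wt_g (Nat.and_lt_two_pow _ hj), ← g_mul_g hi hj]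
  exact wt_add_add_two_mul_wt_mul n _ _

theorem card_S_eq_card_inter_add_one {n i j : ℕ} (hi : i < 2 ^ n) (hj : j < 2 ^ n)
    (h : wt n (g n i + g n j) = wt n (g n i)) : #(S n j) = #(S n i ∩ S n j) + 1 := by
  have hwt := wt_g_add_g hi hj
  rw [h, wt_g hi] at hwt
  refine Nat.pow_right_injective le_rfl (?_ : 2 ^ _ = 2 ^ _)
  rw [pow_succ']
  omega

theorem K_intersection_general (n : ℕ) (i : ℕ)
    (j : ℕ) (hj : j ∈ K n i) :
    (wt n (g n j) = 2 * wt n (g n i) → S n j ∩ S n i = S n i) ∧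
    (wt n (g n j) = wt n (g n i) → ∃ k ∈ S n i, S n j ∩ S n i = S n i \ {k}) := by
  obtain ⟨⟨hij, hjN⟩, -, hw⟩ := by simpa only [K, mem_filter, mem_Ico] using hj
  have hiN : i < 2 ^ n := by omega
  have hcard := card_S_eq_card_inter_add_one hiN hjN hw
  rw [wt_g hiN, wt_g hjN, inter_comm]
  refine ⟨fun h => ?_, fun h => ?_⟩
  · rw [← pow_succ'] at h
    have hSj : #(S n j) = #(S n i) + 1 := Nat.pow_right_injective le_rfl h
    exact eq_of_subset_of_card_le inter_subset_left (by omega)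
  · have hSj : #(S n j) = #(S n i) := Nat.pow_right_injective le_rfl h
    exact exists_inter_eq_sdiff_singleton (by rw [card_sdiff, inter_comm]; omega)

/-- for j ∈ K_i, if w(g_j) = 2·w(g_i) then S_j ∩ S_i = S_i, and if
w(g_j) = w(g_i) then S_j ∩ S_i = S_i \ {k} for some k ∈ S_i. -/
theorem K_intersection (n : ℕ) (hn : 1 ≤ n) (i : ℕ) (hi : i < 2 ^ n)
    (j : ℕ) (hj : j ∈ K n i) :
    (wt n (g n j) = 2 * wt n (g n i) → S n j ∩ S n i = S n i) ∧
    (wt n (g n j) = wt n (g n i) → ∃ k ∈ S n i, S n j ∩ S n i = S n i \ {k}) :=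
  K_intersection_general n i j hj
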